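/- For every n ∈ ℕ, nonnegative real k, and x ∈ [0,1], the second central moment satisfies P_{n,k}^{⟨k/n⟩}((e₁ − x)²; x) = (k+1)x(1−x)/(n+k). -/

import Mathlib

/-!
With `w a b n m = C(n,m) (a)_{m,k} (b)_{n-m,k}`, Pascal's rule gives the Vandermonde identity
`∑ₘ w a b n m = (a+b)_{n,k}`. Absorbing a factor `m` into `C(n,m) (a)_{m,k}` lowers `n` by one and
shifts `a` to `a + k`, so the factorial moments `∑ₘ m w`, `∑ₘ m (m-1) w` are again Vandermonde
sums. For `a = n x`, `b = n - n x` the second central moment is a quadratic combination of these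
three sums.
-/

open Finset Filter

/-- Pochhammer k-symbol: `(λ)_{m,k} = λ(λ+k)⋯(λ+(m-1)k)`. -/
noncomputable def pochK (lam k : ℝ) (m : ℕ) : ℝ :=
  ∏ i ∈ Finset.range m, (lam + i * k)

/-- Lupaş-type operator based on Polya distribution with Pochhammer k-symbol. -/
noncomputable def LupasP (n : ℕ) (k : ℝ) (f : ℝ → ℝ) (x : ℝ) : ℝ :=
  (1 / pochK n k n) * ∑ m ∈ Finset.range (n + 1),
    (n.choose m : ℝ) * pochK (n * x) k m * pochK (n - n * x) k (n - m) * f (m / n)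

/-- Kantorovich-Stancu modification of the Lupaş-type operator. -/
noncomputable def KantK (n : ℕ) (α β k : ℝ) (f : ℝ → ℝ) (x : ℝ) : ℝ :=
  ((n + β + 1) / pochK n k n) * ∑ m ∈ Finset.range (n + 1),
    (n.choose m : ℝ) * pochK (n * x) k m * pochK (n - n * x) k (n - m) *
      ∫ t in ((m + α) / (n + β + 1))..((m + α + 1) / (n + β + 1)), f t

/-- Modulus of continuity of `f` on `[0,1]`. -/
noncomputable def modulus (f : ℝ → ℝ) (δ : ℝ) : ℝ :=
  sSup {y | ∃ x t : ℝ, x ∈ Set.Icc (0:ℝ) 1 ∧ t ∈ Set.Icc (0:ℝ) 1 ∧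
    |t - x| ≤ δ ∧ y = |f t - f x|}

lemma pochK_zero (a k : ℝ) : pochK a k 0 = 1 := prod_range_zero _

lemma pochK_succ_right (a k : ℝ) (m : ℕ) : pochK a k (m + 1) = pochK a k m * (a + m * k) :=
  prod_range_succ _ _

lemma pochK_succ_left (a k : ℝ) (m : ℕ) : pochK a k (m + 1) = a * pochK (a + k) k m := by
  rw [pochK, prod_range_succ', mul_comm]
  simp only [Nat.cast_zero, zero_mul, add_zero, pochK]
  congr 1
  exact prod_congr rfl fun i _ => by push_cast; ring

lemma pochK_pos {a k : ℝ} (ha : 0 < a) (hk : 0 ≤ k) (m : ℕ) : 0 < pochK a k m :=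
  prod_pos fun _ _ => by positivity

/-- The unnormalised Pólya–Eggenberger weights; `LupasP n k` uses `a = n x`, `b = n - n x`. -/
noncomputable def polyaWeight (a b k : ℝ) (n m : ℕ) : ℝ :=
  n.choose m * pochK a k m * pochK b k (n - m)

theorem pochK_add (a b k : ℝ) (n : ℕ) :
    pochK (a + b) k n = ∑ m ∈ range (n + 1), polyaWeight a b k n m := by
  induction n with
  | zero => simp [polyaWeight, pochK_zero]
  | succ n ih =>
    have hpascal := sum_choose_succ_mul (fun i j => pochK a k i * pochK b k j) n
    simp only [← mul_assoc] at hpascal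
    unfold polyaWeight at ih ⊢
    rw [hpascal, pochK_succ_right (a + b), ih, sum_mul, ← sum_add_distrib]
    refine sum_congr rfl fun i hi => ?_
    have hi : i ≤ n := Nat.lt_succ_iff.mp (mem_range.mp hi)
    rw [Nat.succ_sub hi, pochK_succ_right a, pochK_succ_right b, Nat.cast_sub hi]
    ring

/-- Absorption: `m * C(n+1, m) = (n+1) * C(n, m-1)` and `(a)_{m,k} = a * (a+k)_{m-1,k}`. -/
theorem sum_polyaWeight_succ_mul_cast_mul (a b k : ℝ) (n : ℕ) (g : ℕ → ℝ) :
    ∑ m ∈ range (n + 2), polyaWeight a b k (n + 1) m * (m * g m) =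
      (n + 1) * a * ∑ i ∈ range (n + 1), polyaWeight (a + k) b k n i * g (i + 1) := by
  rw [sum_range_succ', mul_sum]
  simp only [Nat.cast_zero, zero_mul, mul_zero, add_zero]
  refine sum_congr rfl fun i _ => ?_
  have habsorb : ((n : ℝ) + 1) * n.choose i = (n + 1).choose (i + 1) * ((i : ℝ) + 1) := by
    exact_mod_cast Nat.add_one_mul_choose_eq n i
  rw [polyaWeight, polyaWeight, pochK_succ_left, Nat.add_sub_add_right]
  push_cast
  linear_combination (-(a * pochK (a + k) k i * pochK b k (n - i) * g (i + 1))) * habsorb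

theorem sum_polyaWeight_mul_cast (a b k : ℝ) (n : ℕ) :
    (a + b) * ∑ m ∈ range (n + 1), polyaWeight a b k n m * m = n * a * pochK (a + b) k n := by
  cases n with
  | zero => simp
  | succ n =>
    have h := sum_polyaWeight_succ_mul_cast_mul a b k n fun _ => 1
    simp only [mul_one] at h
    rw [h, ← pochK_add, add_right_comm, pochK_succ_left (a + b)]
    push_cast
    ring

theorem sum_polyaWeight_mul_cast_mul_cast_sub_one (a b k : ℝ) (n : ℕ) :
    (a + b) * (a + b + k) * ∑ m ∈ range (n + 1), polyaWeight a b k n m * (m * (m - 1)) =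
      n * (n - 1) * a * (a + k) * pochK (a + b) k n := by
  cases n with
  | zero => simp
  | succ n =>
    have h := sum_polyaWeight_succ_mul_cast_mul a b k n fun m => (m : ℝ) - 1
    have h1 := sum_polyaWeight_mul_cast (a + k) b k n
    simp only [Nat.cast_succ, add_sub_cancel_right] at h
    rw [add_right_comm] at h1
    rw [h, pochK_succ_left (a + b)]
    push_cast
    linear_combination ((n : ℝ) + 1) * a * (a + b) * h1

theorem sum_mul_cast_div_sub_sq (s : Finset ℕ) (w : ℕ → ℝ) {n : ℝ} (hn : n ≠ 0) (x : ℝ) :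
    ∑ m ∈ s, w m * ((m / n - x) ^ 2) =
      (∑ m ∈ s, w m * (m * (m - 1)) + ∑ m ∈ s, w m * m) / n ^ 2
        - 2 * x / n * ∑ m ∈ s, w m * m + x ^ 2 * ∑ m ∈ s, w m := by
  rw [← sum_add_distrib, sum_div, mul_sum, mul_sum, ← sum_sub_distrib, ← sum_add_distrib]
  refine sum_congr rfl fun m _ => ?_
  field_simp
  ring

theorem lupas_central_moment_two_general (n : ℕ) (hn : 0 < n) (k : ℝ) (hk : 0 ≤ k)
    (x : ℝ) :
    LupasP n k (fun t => (t - x) ^ 2) x = (k + 1) * x * (1 - x) / (n + k) := by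
  have hn0 : (n : ℝ) ≠ 0 := by positivity
  have hnk : (n : ℝ) + k ≠ 0 := by positivity
  have hP : pochK n k n ≠ 0 := (pochK_pos (by positivity) hk n).ne'
  set w := polyaWeight (n * x) (n - n * x) k n
  have hab : n * x + (n - n * x) = (n : ℝ) := by ring
  have h0 := pochK_add (n * x) (n - n * x) k n
  have h1 := sum_polyaWeight_mul_cast (n * x) (n - n * x) k n
  have h2 := sum_polyaWeight_mul_cast_mul_cast_sub_one (n * x) (n - n * x) k n
  rw [hab] at h0 h1 h2
  have hS1 : ∑ m ∈ range (n + 1), w m * m = n * x * pochK n k n :=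
    mul_left_cancel₀ hn0 (h1.trans (by ring))
  have hS2 : ∑ m ∈ range (n + 1), w m * (m * (m - 1)) =
      (n - 1) * (n * x) * (n * x + k) * pochK n k n / (n + k) := by
    rw [eq_div_iff hnk]
    exact mul_left_cancel₀ hn0 (by linear_combination h2)
  change 1 / pochK n k n * ∑ m ∈ range (n + 1), w m * ((m / n - x) ^ 2) = _
  rw [sum_mul_cast_div_sub_sq _ _ hn0, ← h0, hS1, hS2]
  field_simp
  ring

theorem lupas_central_moment_two (n : ℕ) (hn : 0 < n) (k : ℝ) (hk : 0 ≤ k)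
    (x : ℝ) (hx : x ∈ Set.Icc (0:ℝ) 1) :
    LupasP n k (fun t => (t - x) ^ 2) x = (k + 1) * x * (1 - x) / (n + k) :=
  lupas_central_moment_two_general n hn k hk x
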